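/- With φ(ξ) = sup_{n ∈ ℤ²} (n₁ξ₁ + n₂ξ₂ - (n₁² + n₁n₂ + n₂²)), let (m₁, m₂) ∈ ℤ² and suppose ξ ∈ ℝ² satisfies |ξ₁ - (2m₁ + m₂)| ≤ 1, |ξ₂ - (m₁ + 2m₂)| ≤ 1, and |(ξ₁ - ξ₂) - (m₁ - m₂)| ≤ 1. Then φ(ξ) = m₁ξ₁ + m₂ξ₂ - (m₁² + m₁m₂ + m₂²). -/

import Mathlib

/-!
Write `n = m + d`. The term of index `n` in the supremum differs from the term of index `m` by
`d₁ a + d₂ b - (d₁² + d₁ d₂ + d₂²)`, where `(a, b) = ξ - (2m₁ + m₂, m₁ + 2m₂)` lies in the hexagon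
`|a|, |b|, |a - b| ≤ 1`. On that hexagon a linear form is bounded by its values at the vertices
`±(1, 0), ±(0, 1), ±(1, 1)`, i.e. by `max (|d₁|, |d₂|, |d₁ + d₂|)`, and for integers this is at most
`d₁² + d₁ d₂ + d₂² = (d₁² + d₂² + (d₁ + d₂)²) / 2` because `|k| ≤ k²`.
-/

/-- The tropical theta function φ(ξ) = sup_{n ∈ ℤ²} (n₁ξ₁ + n₂ξ₂ - (n₁² + n₁n₂ + n₂²)). -/
noncomputable def phi (ξ : ℝ × ℝ) : ℝ :=
  sSup (Set.range fun n : ℤ × ℤ =>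
    (n.1 : ℝ) * ξ.1 + (n.2 : ℝ) * ξ.2 -
      ((n.1 : ℝ) ^ 2 + (n.1 : ℝ) * (n.2 : ℝ) + (n.2 : ℝ) ^ 2))

theorem mul_add_mul_le_max_abs_of_abs_sub_le_one {K : Type*} [CommRing K] [LinearOrder K]
    [IsStrictOrderedRing K] {a b : K} (ha : |a| ≤ 1) (hb : |b| ≤ 1)
    (hab : |a - b| ≤ 1) (x y : K) : x * a + y * b ≤ max (max |x| |y|) |x + y| := by
  rw [abs_le] at ha hb hab
  suffices x * a + y * b ≤ |x| ∨ x * a + y * b ≤ |y| ∨ x * a + y * b ≤ |x + y| by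
    rcases this with h | h | h
    · exact h.trans ((le_max_left _ _).trans (le_max_left _ _))
    · exact h.trans ((le_max_right _ _).trans (le_max_left _ _))
    · exact h.trans (le_max_right _ _)
  rcases le_total 0 x with hx | hx <;> rcases le_total 0 y with hy | hy
  ·
    right; right
    rw [abs_of_nonneg (add_nonneg hx hy)]
    nlinarith
  · -- opposite signs: `x a + y b = (x + y) a + (-y) (a - b) = x (a - b) + (x + y) b`
    rcases le_total 0 (x + y) with hs | hs
    · left; rw [abs_of_nonneg hx]; nlinarith
    · right; left; rw [abs_of_nonpos hy]; nlinarith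
  · rcases le_total 0 (x + y) with hs | hs
    · right; left; rw [abs_of_nonneg hy]; nlinarith
    · left; rw [abs_of_nonpos hx]; nlinarith
  · right; right
    rw [abs_of_nonpos (add_nonpos hx hy)]
    nlinarith

theorem Int.max_abs_le_sq_add_mul_add_sq (k l : ℤ) :
    max (max |k| |l|) |k + l| ≤ k ^ 2 + k * l + l ^ 2 := by
  have hsq (j : ℤ) : |j| ≤ j ^ 2 := by simpa using Int.natAbs_le_self_sq j
  have hk : |k| ≤ |k + l| + |l| := by simpa using abs_add_le (k + l) (-l)
  have hl : |l| ≤ |k + l| + |k| := by simpa using abs_add_le (k + l) (-k)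
  have hkl : |k + l| ≤ |k| + |l| := abs_add_le k l
  -- `2 (k² + kl + l²) = k² + l² + (k + l)²`
  have := hsq k; have := hsq l; have := hsq (k + l)
  refine max_le (max_le ?_ ?_) ?_ <;> nlinarith

theorem stmt8 (m₁ m₂ : ℤ) (ξ : ℝ × ℝ)
    (h1 : |ξ.1 - ((2 * m₁ + m₂ : ℤ) : ℝ)| ≤ 1)
    (h2 : |ξ.2 - ((m₁ + 2 * m₂ : ℤ) : ℝ)| ≤ 1)
    (h3 : |(ξ.1 - ξ.2) - ((m₁ - m₂ : ℤ) : ℝ)| ≤ 1) :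
    phi ξ = (m₁ : ℝ) * ξ.1 + (m₂ : ℝ) * ξ.2 -
      ((m₁ : ℝ) ^ 2 + (m₁ : ℝ) * (m₂ : ℝ) + (m₂ : ℝ) ^ 2) := by
  have hab : |(ξ.1 - ((2 * m₁ + m₂ : ℤ) : ℝ)) - (ξ.2 - ((m₁ + 2 * m₂ : ℤ) : ℝ))| ≤ 1 := by
    convert h3 using 2; push_cast; ring
  refine IsGreatest.csSup_eq ⟨⟨(m₁, m₂), rfl⟩, ?_⟩
  rintro _ ⟨⟨n₁, n₂⟩, rfl⟩
  obtain ⟨d₁, rfl⟩ : ∃ d₁, n₁ = m₁ + d₁ := ⟨n₁ - m₁, by ring⟩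
  obtain ⟨d₂, rfl⟩ : ∃ d₂, n₂ = m₂ + d₂ := ⟨n₂ - m₂, by ring⟩
  have hlin := mul_add_mul_le_max_abs_of_abs_sub_le_one h1 h2 hab (d₁ : ℝ) (d₂ : ℝ)
  have hquad : max (max |(d₁ : ℝ)| |(d₂ : ℝ)|) |(d₁ : ℝ) + d₂| ≤
      (d₁ : ℝ) ^ 2 + d₁ * d₂ + (d₂ : ℝ) ^ 2 := by
    exact_mod_cast Int.max_abs_le_sq_add_mul_add_sq d₁ d₂
  push_cast at hlin ⊢
  linear_combination hlin + hquad
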